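/- arXiv:2403.01939 — 3 statements merged into one kernel-verified Lean document; each statement's English description precedes it below -/
import Mathlib

section
/- In the category of sets, an object T is tiny (i.e., the internal hom functor (T → −) : Set → Set has a right adjoint) if and only if T is a singleton (terminal object). -/
/-!
A left adjoint preserves colimits. Since `coyoneda.obj (op T)` preserves the initial object,
`T ⟶ PEmpty` is empty, so `T` is inhabited. Since it preserves the coproduct `PUnit ⊕ PUnit`,
every map `T → PUnit ⊕ PUnit` lands in one summand; the indicator of a point `a` does so only if
every point equals `a`. Conversely, for a singleton `T` the functor `T ⟶ −` is isomorphic to the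
identity, which is its own right adjoint.
-/

open CategoryTheory CategoryTheory.Limits Opposite

universe u

namespace CategoryTheory.Limits.Types

theorem nonempty_of_preservesInitial_coyoneda (T : Type u)
    [PreservesColimit (Functor.empty.{0} (Type u)) (coyoneda.obj (op T))] : Nonempty T := by
  by_contra hT
  rw [not_nonempty_iff] at hT
  have : IsEmpty (T ⟶ PEmpty.{u+1}) :=
    (initial_iff_empty _).mp ⟨isInitialPEmpty.isInitialObj (coyoneda.obj (op T)) _⟩
  exact this.false (TypeCat.ofHom hT.elim)

theorem forall_isLeft_or_forall_isRight_of_preservesColimit_pair_coyoneda (T : Type u)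
    {X Y : Type u} [PreservesColimit (pair X Y) (coyoneda.obj (op T))] (f : T → X ⊕ Y) :
    (∀ t, (f t).isLeft) ∨ (∀ t, (f t).isRight) := by
  obtain ⟨⟨_ | _⟩, g, hg⟩ := jointly_surjective _
    (isColimitOfPreserves (coyoneda.obj (op T)) (binaryCoproductColimit X Y)) (TypeCat.ofHom f)
  · refine .inl fun t => ?_
    have hft : Sum.inl _ = f t := ConcreteCategory.congr_hom hg t
    rw [← hft]
    rfl
  · refine .inr fun t => ?_
    have hft : Sum.inr _ = f t := ConcreteCategory.congr_hom hg t
    rw [← hft]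
    rfl

theorem subsingleton_of_preservesColimit_pair_coyoneda (T : Type u)
    [PreservesColimit (pair PUnit.{u+1} PUnit.{u+1}) (coyoneda.obj (op T))] :
    Subsingleton T := by
  classical
  refine ⟨fun a b => ?_⟩
  let f : T → PUnit.{u+1} ⊕ PUnit.{u+1} := fun t => if t = a then .inl ⟨⟩ else .inr ⟨⟩
  obtain hleft | hright := forall_isLeft_or_forall_isRight_of_preservesColimit_pair_coyoneda T f
  · by_contra hab
    simpa [f, Ne.symm hab] using hleft b
  · simpa [f] using hright a

def coyonedaObjIsoIdOfUnique (T : Type u) [Unique T] : coyoneda.obj (op T) ≅ 𝟭 (Type u) :=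
  coyoneda.mapIso (Equiv.toIso (Equiv.ofUnique PUnit T)).op ≪≫ Coyoneda.punitIso

end CategoryTheory.Limits.Types

/-- In the category of sets, an object `T` is tiny (the functor `(T → −)` has a right
adjoint) if and only if `T` is a singleton. -/
theorem tiny_in_Set_iff_singleton (T : Type u) :
    (∃ R : Type u ⥤ Type u, Nonempty (coyoneda.obj (Opposite.op T) ⊣ R)) ↔
      Nonempty (Unique T) := by
  constructor
  · rintro ⟨R, ⟨adj⟩⟩
    have := adj.leftAdjoint_preservesColimits
    have := Types.nonempty_of_preservesInitial_coyoneda T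
    have := Types.subsingleton_of_preservesColimit_pair_coyoneda T
    exact ⟨uniqueOfSubsingleton (Classical.arbitrary T)⟩
  · rintro ⟨_⟩
    exact ⟨𝟭 _, ⟨Adjunction.ofNatIsoLeft Adjunction.id (Types.coyonedaObjIsoIdOfUnique T).symm⟩⟩
end

section
/- For any small category C with a chosen object c, the representable presheaf y(c) is tiny in the presheaf category PSh(C) when C has finite products: the functor (y(c) ⇒ −) given by exponentiation by y(c) has a right adjoint, whose value on a presheaf Y at object d is the set of natural transformations from the exponential (y(c) ⇒ y(d)) to Y. -/
/-!
Since the Yoneda embedding preserves products, `y(c) ⊗ −` and the left Kan extension along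
`(c ⊗ −)ᵒᵖ` are colimit-preserving functors on presheaves that agree on representables, hence
are isomorphic. Passing to right adjoints, `y(c) ⇒ X` is `X` precomposed with `(c ⊗ −)ᵒᵖ`,
which has the right Kan extension `R` as its right adjoint. Then
`R(Y)(d) ≅ (y(d) ⟶ R(Y)) ≅ ((y(c) ⇒ y(d)) ⟶ Y)` by Yoneda and the adjunction.
-/

open CategoryTheory CategoryTheory.Limits

universe u

namespace CategoryTheory

open MonoidalCategory

variable {C : Type u} [SmallCategory C]

noncomputable def Presheaf.isoOfCompYonedaIso {ℰ : Type*} [Category.{u} ℰ]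
    (L L' : (Cᵒᵖ ⥤ Type u) ⥤ ℰ)
    [PreservesColimitsOfSize.{u, u} L] [PreservesColimitsOfSize.{u, u} L']
    (e : yoneda ⋙ L ≅ yoneda ⋙ L') : L ≅ L' :=
  let e' : uliftYoneda.{u} ⋙ L ≅ uliftYoneda.{u} ⋙ L' :=
    Functor.isoWhiskerRight uliftYonedaIsoYoneda _ ≪≫ e ≪≫
      Functor.isoWhiskerRight uliftYonedaIsoYoneda.symm _
  Presheaf.uniqueExtensionAlongULiftYoneda L (Iso.refl _) ≪≫
    (Presheaf.uniqueExtensionAlongULiftYoneda L' e').symm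

noncomputable def Functor.compYonedaIsoYonedaCompLan {D : Type u} [SmallCategory D]
    (F : C ⥤ D) : F ⋙ yoneda ≅ yoneda ⋙ F.op.lan :=
  Functor.isoWhiskerLeft F uliftYonedaIsoYoneda.symm ≪≫
    Presheaf.compULiftYonedaIsoULiftYonedaCompLan.{u} F ≪≫
    Functor.isoWhiskerRight uliftYonedaIsoYoneda _

variable [CartesianMonoidalCategory C]

noncomputable def tensorLeftYonedaIsoLan (c : C) :
    tensorLeft (yoneda.obj c) ≅ (tensorLeft c).op.lan :=
  have := (ihom.adjunction (yoneda.obj c)).leftAdjoint_preservesColimits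
  have := ((tensorLeft c).op.lanAdjunction (Type u)).leftAdjoint_preservesColimits
  Presheaf.isoOfCompYonedaIso _ _
    ((CartesianMonoidalCategory.prodComparisonNatIso yoneda c).symm ≪≫
      (tensorLeft c).compYonedaIsoYonedaCompLan)

noncomputable def ihomYonedaIsoWhiskeringLeft (c : C) :
    ihom (yoneda.obj c) ≅ (Functor.whiskeringLeft Cᵒᵖ Cᵒᵖ (Type u)).obj (tensorLeft c).op :=
  (ihom.adjunction (yoneda.obj c)).rightAdjointUniq
    (((tensorLeft c).op.lanAdjunction (Type u)).ofNatIsoLeft (tensorLeftYonedaIsoLan c).symm)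

noncomputable def ihomYonedaRanAdjunction (c : C) : ihom (yoneda.obj c) ⊣ (tensorLeft c).op.ran :=
  ((tensorLeft c).op.ranAdjunction (Type u)).ofNatIsoLeft (ihomYonedaIsoWhiskeringLeft c).symm

end CategoryTheory

/-- For a small category `C` with finite products, the representable presheaf `y(c)` is
tiny in `PSh(C)`: the exponential functor `(y(c) ⇒ −)` has a right adjoint `R`, whose
value on a presheaf `Y` at an object `d` is the set of natural transformations
`(y(c) ⇒ y(d)) ⟶ Y`. -/
theorem representable_tiny_in_presheaves (C : Type u) [SmallCategory C]
    [HasFiniteProducts C] (c : C) :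
    ∃ R : (Cᵒᵖ ⥤ Type u) ⥤ (Cᵒᵖ ⥤ Type u),
      Nonempty (ihom (yoneda.obj c) ⊣ R) ∧
      ∀ (Y : Cᵒᵖ ⥤ Type u) (d : Cᵒᵖ),
        Nonempty ((R.obj Y).obj d ≃ ((ihom (yoneda.obj c)).obj (yoneda.obj d.unop) ⟶ Y)) := by
  let : CartesianMonoidalCategory C := .ofHasFiniteProducts
  let adj := ihomYonedaRanAdjunction c
  exact ⟨_, ⟨adj⟩, fun Y d => ⟨yonedaEquiv.symm.trans (adj.homEquiv _ Y).symm⟩⟩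
end

section
/- In Martin-Löf type theory with a type T, binary coproducts, and the tiny-object structure (a right adjoint √ to T → −) satisfying the dependent adjointness equivalence, the canonical map split : ((T → A) + (T → B)) → (T → A + B) defined by case analysis is an equivalence, for any types A and B. -/
/-!
A tiny `T` makes `(T → −)` a left adjoint, so it preserves the coproduct `A ⊕ B`; and a binary
cofan in `Type` is a colimit exactly when the induced map out of the sum type is a bijection.
-/

open CategoryTheory Limits

universe u

theorem CategoryTheory.Limits.Types.bijective_sumElim_of_isColimit {X Y : Type u}
    {c : BinaryCofan X Y} (hc : IsColimit c) : Function.Bijective (Sum.elim c.inl c.inr) :=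
  ((binaryCoproductColimit X Y).coconePointUniqueUpToIso hc).toEquiv.bijective

theorem bijective_sumElim_comp_inl_inr_of_preservesColimit_pair (T A B : Type u)
    [PreservesColimit (pair A B) (coyoneda.obj (Opposite.op T))] :
    Function.Bijective
      (Sum.elim (fun f : T → A => Sum.inl ∘ f) (fun g : T → B => Sum.inr ∘ g)) := by
  have hbij := Types.bijective_sumElim_of_isColimit <|
    mapIsColimitOfPreservesOfIsColimit (coyoneda.obj (Opposite.op T)) _ _
      (Types.binaryCoproductColimit A B)
  have hsplit : Sum.elim (fun f : T → A => Sum.inl ∘ f) (fun g : T → B => Sum.inr ∘ g) =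
      TypeCat.homEquiv ∘
        Sum.elim (fun f : T ⟶ A => f ≫ TypeCat.ofHom Sum.inl)
          (fun g : T ⟶ B => g ≫ TypeCat.ofHom Sum.inr) ∘
        Sum.map TypeCat.homEquiv.symm TypeCat.homEquiv.symm := by
    funext x
    rcases x with f | g <;> rfl
  rw [hsplit]
  exact TypeCat.homEquiv.bijective.comp <| hbij.comp
    (Equiv.sumCongr TypeCat.homEquiv.symm TypeCat.homEquiv.symm).bijective

/-- If `T` is tiny in the category of sets (i.e. `(T → −)` has a right adjoint), then
for any types `A`, `B` the canonical map
`split : (T → A) ⊕ (T → B) → (T → A ⊕ B)`, defined by case analysis and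
post-composition with the coproduct injections, is an equivalence (a bijection). -/
theorem split_is_equiv_of_tiny (T : Type u)
    (h : ∃ R : Type u ⥤ Type u, Nonempty (coyoneda.obj (Opposite.op T) ⊣ R))
    (A B : Type u) :
    Function.Bijective
      (Sum.elim (fun f : T → A => (fun t => Sum.inl (f t) : T → A ⊕ B))
                (fun g : T → B => fun t => Sum.inr (g t))) := by
  obtain ⟨R, ⟨adj⟩⟩ := h
  have := adj.leftAdjoint_preservesColimits
  exact bijective_sumElim_comp_inl_inr_of_preservesColimit_pair T A B
end
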